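/- Let ζ ∈ GI(q) be an element of multiplicative order N, with p ≡ 3 (mod 4), q = p^r, and p ∤ N. Define the FFHT of v = (v_0,...,v_{N−1}) ∈ GF(q)^N by V_k = Σ_{i=0}^{N−1} v_i·cas(ik). Then the inversion formula holds: v_i = N^{-1}·Σ_{k=0}^{N−1} V_k·cas(ik) for all i, where N^{-1} is the inverse of N mod p in GF(q). -/

import Mathlib

open Polynomial

/-!
Since `j² = -1`, `cas(i) = ((1 - j) ζ^i + (1 + j) ζ^(-i)) / 2`, so `cas(ak) cas(bk)` is
`(ζ^((a-b)k) + ζ^((b-a)k) + j (ζ^(-(a+b)k) - ζ^((a+b)k))) / 2`. Summing over `k` with the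
geometric-sum orthogonality `Σ_k ζ^(ck) = N·[N ∣ c]`, the two `a + b` terms cancel and
`Σ_k cas(ak) cas(bk) = N·[N ∣ a - b]`; inversion follows by exchanging the two sums.
-/

/-- The Gaussian integers over GF(q), q = p^r: GI(q) = GF(q)[j]/(j²+1). -/
noncomputable abbrev GI (p r : ℕ) [Fact p.Prime] : Type :=
  AdjoinRoot (X ^ 2 + 1 : (GaloisField p r)[X])

/-- The element j (class of X) in GI(q). -/
noncomputable def jGI (p r : ℕ) [Fact p.Prime] : GI p r := AdjoinRoot.root _

/-- The Hartley kernel cas(i) = cos(i) + sin(i)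
    where cos(i) = (ζ^i + ζ^{-i})/2 and sin(i) = (ζ^i − ζ^{-i})/(2j). -/
noncomputable def cas (p r : ℕ) [Fact p.Prime]
    [Fact (Irreducible (X ^ 2 + 1 : (GaloisField p r)[X]))]
    (ζ : GI p r) (i : ℤ) : GI p r :=
  (ζ ^ i + ζ ^ (-i)) / 2 + (ζ ^ i - ζ ^ (-i)) / (2 * jGI p r)

noncomputable def hartleyCas {K : Type*} [Field K] (j ζ : K) (i : ℤ) : K :=
  (ζ ^ i + ζ ^ (-i)) / 2 + (ζ ^ i - ζ ^ (-i)) / (2 * j)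

theorem IsPrimitiveRoot.sum_zpow_mul {K : Type*} [Field K] {ζ : K} {N : ℕ}
    (hζ : IsPrimitiveRoot ζ N) (c : ℤ) :
    ∑ k : Fin N, ζ ^ (c * k) = if (N : ℤ) ∣ c then (N : K) else 0 := by
  simp_rw [zpow_mul, zpow_natCast]
  rw [Fin.sum_univ_eq_sum_range (fun k => (ζ ^ c) ^ k)]
  split_ifs with hc
  · simp [(hζ.zpow_eq_one_iff_dvd c).mpr hc]
  · have hN : (ζ ^ c) ^ N = 1 := by
      rw [← zpow_natCast, ← zpow_mul, mul_comm, zpow_mul, hζ.zpow_eq_one, one_zpow]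
    rw [geom_sum_eq (mt (hζ.zpow_eq_one_iff_dvd c).mp hc), hN, sub_self, zero_div]

theorem Fin.intCast_dvd_sub_iff {N : ℕ} (m i : Fin N) : (N : ℤ) ∣ (m : ℤ) - i ↔ m = i := by
  refine ⟨fun h => ?_, fun h => by simp [h]⟩
  have := Int.eq_zero_of_abs_lt_dvd h (by rw [abs_lt]; omega)
  omega

section Hartley

variable {K : Type*} [Field K] {j ζ : K}

theorem hartleyCas_eq (hj : j ^ 2 = -1) (h2 : (2 : K) ≠ 0) (i : ℤ) :
    hartleyCas j ζ i = ((1 - j) * ζ ^ i + (1 + j) * ζ ^ (-i)) / 2 := by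
  have hj0 : j ≠ 0 := by rintro rfl; simp at hj
  rw [hartleyCas]
  field_simp
  linear_combination (ζ ^ i - ζ ^ (-i)) * hj

theorem hartleyCas_mul_hartleyCas (hj : j ^ 2 = -1) (h2 : (2 : K) ≠ 0) (hζ : ζ ≠ 0) (a b : ℤ) :
    hartleyCas j ζ a * hartleyCas j ζ b =
      (ζ ^ (a - b) + ζ ^ (b - a) + j * (ζ ^ (-(a + b)) - ζ ^ (a + b))) / 2 := by
  rw [hartleyCas_eq hj h2, hartleyCas_eq hj h2]
  simp only [sub_eq_add_neg, neg_add, zpow_add₀ hζ]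
  field_simp
  linear_combination (ζ ^ a - ζ ^ (-a)) * (ζ ^ b - ζ ^ (-b)) * hj

theorem sum_hartleyCas_mul_hartleyCas (hj : j ^ 2 = -1) (h2 : (2 : K) ≠ 0) {N : ℕ} [NeZero N]
    (hζ : IsPrimitiveRoot ζ N) (a b : ℤ) :
    ∑ k : Fin N, hartleyCas j ζ (a * k) * hartleyCas j ζ (b * k) =
      if (N : ℤ) ∣ a - b then (N : K) else 0 := by
  have hζ0 : ζ ≠ 0 := hζ.ne_zero (NeZero.ne N)
  have hterm : ∀ k : Fin N, hartleyCas j ζ (a * k) * hartleyCas j ζ (b * k) =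
      (ζ ^ ((a - b) * k) + ζ ^ ((b - a) * k) +
        j * (ζ ^ (-(a + b) * k) - ζ ^ ((a + b) * k))) / 2 := fun k => by
    rw [hartleyCas_mul_hartleyCas hj h2 hζ0]; ring_nf
  simp only [hterm, ← Finset.sum_div, Finset.sum_add_distrib, ← Finset.mul_sum,
    Finset.sum_sub_distrib, hζ.sum_zpow_mul, dvd_neg, dvd_sub_comm]
  split_ifs <;> field_simp <;> ring

theorem hartleyCas_inversion (hj : j ^ 2 = -1) (h2 : (2 : K) ≠ 0) {N : ℕ}
    [NeZero N] (hζ : IsPrimitiveRoot ζ N) (v : Fin N → K) (i : Fin N) :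
    ∑ k : Fin N, (∑ m : Fin N, v m * hartleyCas j ζ (m * k)) * hartleyCas j ζ (i * k) =
      N * v i := by
  calc ∑ k : Fin N, (∑ m : Fin N, v m * hartleyCas j ζ (m * k)) * hartleyCas j ζ (i * k)
      = ∑ m : Fin N, v m *
          ∑ k : Fin N, hartleyCas j ζ (m * k) * hartleyCas j ζ (i * k) := by
        simp only [Finset.sum_mul, Finset.mul_sum, mul_assoc]
        exact Finset.sum_comm
    _ = N * v i := by
        simp [sum_hartleyCas_mul_hartleyCas hj h2 hζ, Fin.intCast_dvd_sub_iff, mul_comm]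

end Hartley

theorem jGI_sq (p r : ℕ) [Fact p.Prime] : jGI p r ^ 2 = -1 := by
  have h := AdjoinRoot.eval₂_root (X ^ 2 + 1 : (GaloisField p r)[X])
  simp only [eval₂_add, eval₂_X_pow, eval₂_one] at h
  rw [jGI]; linear_combination h

theorem cas_eq_hartleyCas (p r : ℕ) [Fact p.Prime]
    [Fact (Irreducible (X ^ 2 + 1 : (GaloisField p r)[X]))] (ζ : GI p r) (i : ℤ) :
    cas p r ζ i = hartleyCas (jGI p r) ζ i :=
  rfl

theorem ffht_inversion_general (p r N : ℕ) [Fact p.Prime] (hp : p % 4 = 3)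
    [Fact (Irreducible (X ^ 2 + 1 : (GaloisField p r)[X]))]
    (hpN : ¬ p ∣ N)
    (ζ : GI p r) (hN : orderOf ζ = N)
    (v : Fin N → GaloisField p r)
    (V : Fin N → GI p r)
    (hV : ∀ k : Fin N, V k =
      ∑ i : Fin N, algebraMap (GaloisField p r) (GI p r) (v i) * cas p r ζ ((i : ℤ) * k)) :
    ∀ i : Fin N, algebraMap (GaloisField p r) (GI p r) (v i) =
      (N : GI p r)⁻¹ * ∑ k : Fin N, V k * cas p r ζ ((i : ℤ) * k) := by
  intro i
  have : NeZero N := ⟨i.pos.ne'⟩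
  have : CharP (GI p r) p :=
    charP_of_injective_ringHom (algebraMap (GaloisField p r) (GI p r)).injective p
  have hNK : (N : GI p r) ≠ 0 := by rwa [Ne, CharP.cast_eq_zero_iff _ p]
  have h2 : (2 : GI p r) ≠ 0 := by
    have hp2 : ¬ p ∣ 2 := fun h => by
      have := (Nat.prime_dvd_prime_iff_eq Fact.out Nat.prime_two).mp h; omega
    exact_mod_cast (CharP.cast_eq_zero_iff (GI p r) p 2).not.mpr hp2
  simp only [hV, cas_eq_hartleyCas]
  rw [eq_inv_mul_iff_mul_eq₀ hNK, eq_comm]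
  exact hartleyCas_inversion (jGI_sq p r) h2 (hN ▸ IsPrimitiveRoot.orderOf ζ) _ i

/-- Inversion formula for the FFHT: if V_k = Σ_i v_i·cas(ik) is the finite field
Hartley transform of v ∈ GF(q)^N, then v_i = N^{-1}·Σ_k V_k·cas(ik). -/
theorem ffht_inversion (p r N : ℕ) [Fact p.Prime] (hp : p % 4 = 3)
    [Fact (Irreducible (X ^ 2 + 1 : (GaloisField p r)[X]))]
    (hpN : ¬ p ∣ N) (hN0 : 0 < N)
    (ζ : GI p r) (hζ : ζ ≠ 0) (hN : orderOf ζ = N)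
    (v : Fin N → GaloisField p r)
    (V : Fin N → GI p r)
    (hV : ∀ k : Fin N, V k =
      ∑ i : Fin N, algebraMap (GaloisField p r) (GI p r) (v i) * cas p r ζ ((i : ℤ) * k)) :
    ∀ i : Fin N, algebraMap (GaloisField p r) (GI p r) (v i) =
      (N : GI p r)⁻¹ * ∑ k : Fin N, V k * cas p r ζ ((i : ℤ) * k) :=
  ffht_inversion_general p r N hp hpN ζ hN v V hV
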